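/- arXiv:1110.1080 — 5 statements merged into one kernel-verified Lean document; each statement's English description precedes it below -/
import Mathlib

section
/- Let E, F be complex Banach spaces, P a multiple r-summing k-homogeneous polynomial and Q a multiple r-summing l-homogeneous polynomial on E (scalar-valued). Then the product PQ is multiple r-summing and ‖PQ‖_{M_r} ≤ ‖P‖_{M_r} · ‖Q‖_{M_r}. -/
open scoped BigOperators

/-- The weak `ℓ_r` norm of a finite family `x : Fin m → E`:
`sup { (Σ_i |φ(x_i)|^r)^{1/r} : φ ∈ B_{E'} }`. -/
noncomputable def weakLrNorm {E : Type*} [NormedAddCommGroup E] [NormedSpace ℂ E]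
    (r : ℝ) {m : ℕ} (x : Fin m → E) : ℝ :=
  ⨆ φ : {φ : E →L[ℂ] ℂ // ‖φ‖ ≤ 1}, (∑ i, ‖φ.1 (x i)‖ ^ r) ^ (1 / r)

/-- `T` (the symmetric `n`-linear form of an `n`-homogeneous polynomial) is multiple
`r`-summing with constant `C`: for all finite families with weak `ℓ_r` norm at most `1`,
`(Σ_{i₁,…,i_n} |T(x₁^{i₁},…,x_n^{i_n})|^r)^{1/r} ≤ C`. -/
def IsMultipleSumming {E : Type*} [NormedAddCommGroup E] [NormedSpace ℂ E]
    (r C : ℝ) {n : ℕ} (T : ContinuousMultilinearMap ℂ (fun _ : Fin n => E) ℂ) : Prop :=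
  ∀ (m : Fin n → ℕ) (x : ∀ j, Fin (m j) → E),
    (∀ j, weakLrNorm r (x j) ≤ 1) →
    (∑ i : ∀ j, Fin (m j), ‖T (fun j => x j (i j))‖ ^ r) ^ (1 / r) ≤ C

/-! Polarization: a multilinear form is determined, up to symmetrization, by its values on the
diagonal. Hence the symmetric form `R` of `PQ` is the average over `σ ∈ S_{k+l}` of the
`(k+l)`-linear form `(x, y) ↦ P x * Q y` with its variables permuted by `σ`. For each `σ` the
`r`-sum over the product index set factors, giving the constant `CP * CQ`; the triangle
inequality in `ℓ_r` then bounds the average by the same constant. -/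

open Finset

theorem Finset.sum_superset_neg_one_pow_card_compl {α : Type*} [Fintype α] [DecidableEq α]
    (B : Finset α) :
    ∑ S with B ⊆ S, (-1 : ℤ) ^ #Sᶜ = if B = univ then 1 else 0 := by
  calc ∑ S with B ⊆ S, (-1 : ℤ) ^ #Sᶜ = ∑ T ∈ Bᶜ.powerset, (-1 : ℤ) ^ #T :=
        sum_nbij' compl compl (by simp) (by simp [subset_compl_comm])
          (by simp) (by simp) (by simp)
    _ = if B = univ then 1 else 0 := by simp [sum_powerset_neg_one_pow_card]

theorem Fintype.sum_perm_eq_sum_surjective {α M : Type*} [Fintype α] [DecidableEq α]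
    [AddCommMonoid M] (g : (α → α) → M) :
    ∑ σ : Equiv.Perm α, g σ = ∑ f : α → α, if Function.Surjective f then g f else 0 := by
  rw [← sum_filter]
  refine sum_nbij' (fun σ => σ) (fun f => if h : Function.Surjective f then
    Equiv.ofBijective f (Finite.surjective_iff_bijective.mp h) else 1) ?_ ?_ ?_ ?_ ?_
  · simp [Equiv.surjective]
  · simp
  · intro σ _
    simp [σ.surjective]
  · intro f hf
    simp [(mem_filter.mp hf).2]
  · simp

/-- Inclusion–exclusion over the ranges of the maps `ι → ι`: only the surjective ones survive. -/
theorem MultilinearMap.sum_perm_map_comp_eq_polarization {R M N ι : Type*} [CommSemiring R]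
    [AddCommMonoid M] [Module R M] [AddCommGroup N] [Module R N] [Fintype ι] [DecidableEq ι]
    (f : MultilinearMap R (fun _ : ι => M) N) (x : ι → M) :
    ∑ σ : Equiv.Perm ι, f (x ∘ σ) = ∑ S : Finset ι, (-1 : ℤ) ^ #Sᶜ • f (fun _ => ∑ i ∈ S, x i) := by
  have expand : ∀ S : Finset ι, f (fun _ => ∑ i ∈ S, x i)
      = ∑ r : ι → ι, if univ.image r ⊆ S then f (x ∘ r) else 0 := by
    intro S
    rw [f.map_sum_finset, ← sum_filter]
    congr 1
    ext r; simp [image_subset_iff]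
  simp_rw [expand, smul_sum, smul_ite, smul_zero]
  rw [sum_comm, Fintype.sum_perm_eq_sum_surjective (fun r => f (x ∘ r))]
  refine sum_congr rfl fun r _ => ?_
  rw [← sum_filter, ← sum_smul, sum_superset_neg_one_pow_card_compl]
  simp only [eq_univ_iff_forall, mem_image, mem_univ, true_and, ite_smul, one_smul, zero_smul]
  rfl

theorem MultilinearMap.sum_perm_map_comp_eq_of_diag_eq {R M N ι : Type*} [CommSemiring R]
    [AddCommMonoid M] [Module R M] [AddCommGroup N] [Module R N] [Fintype ι] [DecidableEq ι]
    {f g : MultilinearMap R (fun _ : ι => M) N} (h : ∀ v, f (fun _ => v) = g (fun _ => v))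
    (x : ι → M) :
    ∑ σ : Equiv.Perm ι, f (x ∘ σ) = ∑ σ : Equiv.Perm ι, g (x ∘ σ) := by
  simp only [sum_perm_map_comp_eq_polarization, h]

theorem ContinuousMultilinearMap.eq_inv_card_smul_sum_domDomCongr {𝕜 E F ι : Type*}
    [NontriviallyNormedField 𝕜] [CharZero 𝕜] [NormedAddCommGroup E] [NormedSpace 𝕜 E]
    [NormedAddCommGroup F] [NormedSpace 𝕜 F] [Fintype ι] [DecidableEq ι]
    {f g : ContinuousMultilinearMap 𝕜 (fun _ : ι => E) F}
    (hf : ∀ (σ : Equiv.Perm ι) x, f (x ∘ σ) = f x) (h : ∀ v, f (fun _ => v) = g (fun _ => v)) :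
    f = ((Fintype.card (Equiv.Perm ι) : 𝕜))⁻¹ • ∑ σ : Equiv.Perm ι, g.domDomCongr σ := by
  ext x
  have key := MultilinearMap.sum_perm_map_comp_eq_of_diag_eq
    (f := f.toMultilinearMap) (g := g.toMultilinearMap) h x
  simp only [coe_coe, hf, sum_const, card_univ] at key
  rw [smul_apply, _root_.sum_apply, eq_inv_smul_iff₀ (by simp [Fintype.card_ne_zero]),
    Nat.cast_smul_eq_nsmul, key]
  rfl

namespace ContinuousMultilinearMap

variable {𝕜 E : Type*} [NontriviallyNormedField 𝕜] [NormedAddCommGroup E] [NormedSpace 𝕜 E]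
  {k l : ℕ}

noncomputable def mulAppend (P : ContinuousMultilinearMap 𝕜 (fun _ : Fin k => E) 𝕜)
    (Q : ContinuousMultilinearMap 𝕜 (fun _ : Fin l => E) 𝕜) :
    ContinuousMultilinearMap 𝕜 (fun _ : Fin (k + l) => E) 𝕜 :=
  (P.smulRight Q).uncurrySum.domDomCongr finSumFinEquiv

@[simp]
theorem mulAppend_apply (P : ContinuousMultilinearMap 𝕜 (fun _ : Fin k => E) 𝕜)
    (Q : ContinuousMultilinearMap 𝕜 (fun _ : Fin l => E) 𝕜) (v : Fin (k + l) → E) :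
    P.mulAppend Q v = P (fun a => v (Fin.castAdd l a)) * Q (fun b => v (Fin.natAdd k b)) := by
  rfl

end ContinuousMultilinearMap

namespace IsMultipleSumming

variable {E : Type*} [NormedAddCommGroup E] [NormedSpace ℂ E] {r : ℝ} {n : ℕ}
  {C C₁ C₂ : ℝ} {T T₁ T₂ : ContinuousMultilinearMap ℂ (fun _ : Fin n => E) ℂ}

theorem zero (hr : 0 < r) :
    IsMultipleSumming r 0 (0 : ContinuousMultilinearMap ℂ (fun _ : Fin n => E) ℂ) := by
  intro m x _
  simp [Real.zero_rpow hr.ne', Real.zero_rpow (inv_ne_zero hr.ne')]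

theorem add (hr : 1 ≤ r) (h₁ : IsMultipleSumming r C₁ T₁) (h₂ : IsMultipleSumming r C₂ T₂) :
    IsMultipleSumming r (C₁ + C₂) (T₁ + T₂) := by
  intro m x hx
  calc (∑ i : ∀ j, Fin (m j), ‖(T₁ + T₂) (fun j => x j (i j))‖ ^ r) ^ (1 / r)
      ≤ (∑ i : ∀ j, Fin (m j),
          (‖T₁ (fun j => x j (i j))‖ + ‖T₂ (fun j => x j (i j))‖) ^ r) ^ (1 / r) := by
        gcongr with i
        exact norm_add_le _ _
    _ ≤ (∑ i : ∀ j, Fin (m j), ‖T₁ (fun j => x j (i j))‖ ^ r) ^ (1 / r)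
          + (∑ i : ∀ j, Fin (m j), ‖T₂ (fun j => x j (i j))‖ ^ r) ^ (1 / r) :=
        Real.Lp_add_le_of_nonneg _ hr (fun _ _ => norm_nonneg _) (fun _ _ => norm_nonneg _)
    _ ≤ C₁ + C₂ := add_le_add (h₁ m x hx) (h₂ m x hx)

theorem sum {α : Type*} (hr : 1 ≤ r) {s : Finset α} {C : α → ℝ}
    {T : α → ContinuousMultilinearMap ℂ (fun _ : Fin n => E) ℂ}
    (h : ∀ a ∈ s, IsMultipleSumming r (C a) (T a)) :
    IsMultipleSumming r (∑ a ∈ s, C a) (∑ a ∈ s, T a) := by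
  classical
  induction s using Finset.induction_on with
  | empty => simpa using zero (n := n) (E := E) (zero_lt_one.trans_le hr)
  | insert a s ha ih =>
    rw [sum_insert ha, sum_insert ha]
    exact (h a (mem_insert_self a s)).add hr (ih fun b hb => h b (mem_insert_of_mem hb))

theorem smul (hr : 0 < r) (c : ℂ) (h : IsMultipleSumming r C T) :
    IsMultipleSumming r (‖c‖ * C) (c • T) := by
  intro m x hx
  calc (∑ i : ∀ j, Fin (m j), ‖(c • T) (fun j => x j (i j))‖ ^ r) ^ (1 / r)
      = ‖c‖ * (∑ i : ∀ j, Fin (m j), ‖T (fun j => x j (i j))‖ ^ r) ^ (1 / r) := by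
        simp_rw [smul_apply, norm_smul,
          Real.mul_rpow (norm_nonneg c) (norm_nonneg _), ← mul_sum]
        rw [Real.mul_rpow (by positivity) (by positivity), ← Real.rpow_mul (norm_nonneg c),
          mul_one_div_cancel hr.ne', Real.rpow_one]
    _ ≤ ‖c‖ * C := mul_le_mul_of_nonneg_left (h m x hx) (norm_nonneg c)

theorem domDomCongr (σ : Equiv.Perm (Fin n)) (h : IsMultipleSumming r C T) :
    IsMultipleSumming r C (T.domDomCongr σ) := by
  intro m x hx
  have reindex := Fintype.sum_equiv (Equiv.piCongrLeft (fun j => Fin (m j)) σ)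
    (fun i => ‖T (fun j => x (σ j) (i j))‖ ^ r)
    (fun i => ‖T.domDomCongr σ (fun j => x j (i j))‖ ^ r)
    (fun i => by simp [Equiv.piCongrLeft_apply_apply])
  rw [← reindex]
  exact h (fun j => m (σ j)) (fun j => x (σ j)) (fun j => hx (σ j))

theorem mulAppend {k l : ℕ} {CP CQ : ℝ}
    {P : ContinuousMultilinearMap ℂ (fun _ : Fin k => E) ℂ}
    {Q : ContinuousMultilinearMap ℂ (fun _ : Fin l => E) ℂ}
    (hP : IsMultipleSumming r CP P) (hQ : IsMultipleSumming r CQ Q) :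
    IsMultipleSumming r (CP * CQ) (P.mulAppend Q) := by
  intro m x hx
  set a : (∀ u : Fin k, Fin (m (Fin.castAdd l u))) → ℝ :=
    fun i => ‖P (fun u => x _ (i u))‖ ^ r
  set b : (∀ v : Fin l, Fin (m (Fin.natAdd k v))) → ℝ :=
    fun i => ‖Q (fun v => x _ (i v))‖ ^ r
  have split : ∑ i : ∀ j, Fin (m j), ‖P.mulAppend Q (fun j => x j (i j))‖ ^ r
      = (∑ i, a i) * ∑ i, b i := by
    let e := (Equiv.sumPiEquivProdPi _).symm.trans
      (Equiv.piCongrLeft (fun j => Fin (m j)) finSumFinEquiv)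
    rw [sum_mul_sum, ← Fintype.sum_prod_type', ← e.sum_comp]
    refine sum_congr rfl fun i _ => ?_
    have e_castAdd (u : Fin k) : e i (Fin.castAdd l u) = i.1 u :=
      Equiv.piCongrLeft_apply_apply (fun j => Fin (m j)) finSumFinEquiv
        ((Equiv.sumPiEquivProdPi _).symm i) (.inl u)
    have e_natAdd (v : Fin l) : e i (Fin.natAdd k v) = i.2 v :=
      Equiv.piCongrLeft_apply_apply (fun j => Fin (m j)) finSumFinEquiv
        ((Equiv.sumPiEquivProdPi _).symm i) (.inr v)
    simp only [a, b, ContinuousMultilinearMap.mulAppend_apply, norm_mul]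
    rw [Real.mul_rpow (norm_nonneg _) (norm_nonneg _)]
    simp_rw [e_castAdd, e_natAdd]
  have ha : 0 ≤ (∑ i, a i) ^ (1 / r) := by positivity
  have hb : 0 ≤ (∑ i, b i) ^ (1 / r) := by positivity
  rw [split, Real.mul_rpow (by positivity) (by positivity)]
  exact mul_le_mul (hP _ _ fun u => hx _) (hQ _ _ fun v => hx _) hb
    (ha.trans (hP _ _ fun u => hx _))

end IsMultipleSumming

theorem stmt_7_general {E : Type*} [NormedAddCommGroup E] [NormedSpace ℂ E]
    {k l : ℕ} (r : ℝ) (hr : 1 ≤ r)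
    (P : ContinuousMultilinearMap ℂ (fun _ : Fin k => E) ℂ)
    (Q : ContinuousMultilinearMap ℂ (fun _ : Fin l => E) ℂ)
    (R : ContinuousMultilinearMap ℂ (fun _ : Fin (k + l) => E) ℂ)
    (hRsym : ∀ (σ : Equiv.Perm (Fin (k + l))) (x : Fin (k + l) → E), R (x ∘ σ) = R x)
    (hdiag : ∀ x : E, R (fun _ => x) = P (fun _ => x) * Q (fun _ => x))
    (CP CQ : ℝ)
    (hP : IsMultipleSumming r CP P) (hQ : IsMultipleSumming r CQ Q) :
    IsMultipleSumming r (CP * CQ) R := by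
  have hR := R.eq_inv_card_smul_sum_domDomCongr hRsym (g := P.mulAppend Q) (by simpa using hdiag)
  have hsum := (IsMultipleSumming.sum (s := univ) hr fun σ _ =>
    (hP.mulAppend hQ).domDomCongr σ).smul (zero_lt_one.trans_le hr)
      ((Fintype.card (Equiv.Perm (Fin (k + l))) : ℂ)⁻¹)
  rw [hR]
  convert hsum using 1
  simp [sum_const, card_univ]

/-- If `P` is a multiple `r`-summing `k`-homogeneous polynomial and `Q` a multiple `r`-summing
`l`-homogeneous polynomial on a complex Banach space `E`, then the product `PQ` (whose
symmetric multilinear form is `R`) is multiple `r`-summing with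
`‖PQ‖_{M_r} ≤ ‖P‖_{M_r} ‖Q‖_{M_r}`. -/
theorem stmt_7 {E : Type*} [NormedAddCommGroup E] [NormedSpace ℂ E] [CompleteSpace E]
    {k l : ℕ} (r : ℝ) (hr : 1 ≤ r)
    (P : ContinuousMultilinearMap ℂ (fun _ : Fin k => E) ℂ)
    (Q : ContinuousMultilinearMap ℂ (fun _ : Fin l => E) ℂ)
    (R : ContinuousMultilinearMap ℂ (fun _ : Fin (k + l) => E) ℂ)
    (hPsym : ∀ (σ : Equiv.Perm (Fin k)) (x : Fin k → E), P (x ∘ σ) = P x)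
    (hQsym : ∀ (σ : Equiv.Perm (Fin l)) (x : Fin l → E), Q (x ∘ σ) = Q x)
    (hRsym : ∀ (σ : Equiv.Perm (Fin (k + l))) (x : Fin (k + l) → E), R (x ∘ σ) = R x)
    (hdiag : ∀ x : E, R (fun _ => x) = P (fun _ => x) * Q (fun _ => x))
    (CP CQ : ℝ) (hCP : 0 ≤ CP) (hCQ : 0 ≤ CQ)
    (hP : IsMultipleSumming r CP P) (hQ : IsMultipleSumming r CQ Q) :
    IsMultipleSumming r (CP * CQ) R :=
  stmt_7_general r hr P Q R hRsym hdiag CP CQ hP hQ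
end

section
/- Let (X,q) be a Riemann domain spread over a Banach space E, let A ⊂ X be an open X-bounded set with d_X(A) ≥ δ > 0, and suppose the ball B_s(x) ⊂ A exists. Then the ball B_{s+δ}(x) exists (i.e., q restricts to a homeomorphism of some neighbourhood of x onto B_E(q(x), s+δ)). -/
/-- In a Riemann domain `(X, q)` over a Banach space `E`, a ball `B_r(x)` exists when some
open neighbourhood of `x` is mapped by `q` injectively onto the metric ball `B_E(q x, r)`
(hence homeomorphically, `q` being a local homeomorphism). -/
def HasBall {X E : Type*} [TopologicalSpace X] [NormedAddCommGroup E]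
    (q : X → E) (x : X) (r : ℝ) : Prop :=
  ∃ U : Set X, IsOpen U ∧ x ∈ U ∧ Set.InjOn q U ∧ q '' U = Metric.ball (q x) r

/-!
The ball `B_s(x)` is the image of a continuous section `f` of `q` over `B(q x, s)`. A point `e`
with `‖e - q x‖ < s + δ` lies within `δ` of some point `p` of the segment `[q x, e]` inside
`B(q x, s)`, and the ball of radius `< δ` around `f p ∈ A` carries a section near `e` which agrees
with `f` on the convex overlap of the two balls. Gluing gives a section over a convex neighbourhood
of `[q x, e]`. Since `X` is Hausdorff, sections of the local homeomorphism `q` agreeing at `q x`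
agree on any connected set, so these sections over star-convex domains glue to one section over
`B(q x, s + δ)`, whose image is the required ball.
-/

open Set Metric

section Sections

variable {X Y : Type*} [TopologicalSpace X] [TopologicalSpace Y]

def IsContinuousSectionOn (q : X → Y) (g : Y → X) (D : Set Y) : Prop :=
  ContinuousOn g D ∧ LeftInvOn q g D

theorem IsContinuousSectionOn.mono {q : X → Y} {g : Y → X} {D D' : Set Y}
    (hg : IsContinuousSectionOn q g D) (h : D' ⊆ D) : IsContinuousSectionOn q g D' :=
  ⟨hg.1.mono h, hg.2.mono h⟩

variable {q : X → Y}

theorem IsLocalHomeomorph.exists_section_of_injOn [Nonempty X] (hq : IsLocalHomeomorph q)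
    {V : Set X} (hV : IsOpen V) (hinj : InjOn q V) :
    ∃ g : Y → X, IsContinuousSectionOn q g (q '' V) ∧ MapsTo g (q '' V) V ∧ LeftInvOn g q V := by
  let e := PartialHomeomorph.ofContinuousOpen (hinj.toPartialEquiv q V)
    hq.continuous.continuousOn hq.isOpenMap hV
  exact ⟨e.symm, ⟨e.continuousOn_symm, fun y hy => e.right_inv hy⟩,
    fun y hy => e.map_target hy, fun v hv => e.left_inv hv⟩

theorem IsLocalHomeomorph.eqOn_of_isPreconnected [T2Space X] (hq : IsLocalHomeomorph q)
    {D : Set Y} (hD : IsPreconnected D) {g₁ g₂ : Y → X}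
    (hg₁ : IsContinuousSectionOn q g₁ D) (hg₂ : IsContinuousSectionOn q g₂ D)
    {y₀ : Y} (hy₀ : y₀ ∈ D) (h : g₁ y₀ = g₂ y₀) : EqOn g₁ g₂ D :=
  (T2Space.isSeparatedMap q).eqOn_of_comp_eqOn hq.isLocallyInjective hD hg₁.1 hg₂.1
    (fun _ hy => (hg₁.2 hy).trans (hg₂.2 hy).symm) hy₀ h

theorem IsLocalHomeomorph.exists_section_union [T2Space X] (hq : IsLocalHomeomorph q)
    {D₁ D₂ : Set Y} (hD₁ : IsOpen D₁) (hD₂ : IsOpen D₂) (hD : IsPreconnected (D₁ ∩ D₂))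
    {g₁ g₂ : Y → X} (hg₁ : IsContinuousSectionOn q g₁ D₁) (hg₂ : IsContinuousSectionOn q g₂ D₂)
    {y₀ : Y} (hy₀ : y₀ ∈ D₁ ∩ D₂) (h : g₁ y₀ = g₂ y₀) :
    ∃ g, IsContinuousSectionOn q g (D₁ ∪ D₂) ∧ EqOn g g₁ D₁ := by
  classical
  have hagree : EqOn g₁ g₂ (D₁ ∩ D₂) :=
    hq.eqOn_of_isPreconnected hD (hg₁.mono inter_subset_left) (hg₂.mono inter_subset_right) hy₀ h
  have h₁ : EqOn (D₁.piecewise g₁ g₂) g₁ D₁ := fun y hy => piecewise_eq_of_mem _ _ _ hy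
  have h₂ : EqOn (D₁.piecewise g₁ g₂) g₂ D₂ := fun y hy => by
    by_cases hy₁ : y ∈ D₁
    · rw [piecewise_eq_of_mem _ _ _ hy₁]; exact hagree ⟨hy₁, hy⟩
    · exact piecewise_eq_of_notMem _ _ _ hy₁
  refine ⟨D₁.piecewise g₁ g₂, ⟨?_, ?_⟩, h₁⟩
  · exact (hg₁.1.congr h₁).union_of_isOpen (hg₂.1.congr h₂) hD₁ hD₂
  · rintro y (hy | hy)
    · rw [h₁ hy]; exact hg₁.2 hy
    · rw [h₂ hy]; exact hg₂.2 hy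

end Sections

theorem IsLocalHomeomorph.hasBall_of_section {X E : Type*} [TopologicalSpace X]
    [NormedAddCommGroup E] {q : X → E} (hq : IsLocalHomeomorph q) {g : E → X} {x : X} {r : ℝ}
    (hr : 0 < r) (hg : IsContinuousSectionOn q g (ball (q x) r)) (hgx : g (q x) = x) :
    HasBall q x r := by
  have hemb : Topology.IsOpenEmbedding ((ball (q x) r).domRestrict g) := by
    refine hq.isOpenEmbedding_of_comp ?_ hg.1.domRestrict
    convert isOpen_ball.isOpenEmbedding_subtypeVal using 1
    exact funext fun z => hg.2 z.2
  refine ⟨g '' ball (q x) r, ?_, ⟨q x, mem_ball_self hr, hgx⟩, hg.2.rightInvOn_image.injOn,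
    hg.2.image_image⟩
  rw [← range_domRestrict]
  exact hemb.isOpen_range

section Segments

theorem segment_subset_union_segment {𝕜 E : Type*} [Field 𝕜] [LinearOrder 𝕜]
    [IsStrictOrderedRing 𝕜] [AddCommGroup E] [Module 𝕜 E] {x y z : E}
    (hy : y ∈ segment 𝕜 x z) : segment 𝕜 x z ⊆ segment 𝕜 x y ∪ segment 𝕜 y z := by
  intro w hw
  simp only [mem_union, mem_segment_iff_wbtw] at hy hw ⊢
  obtain ⟨t, ht, rfl⟩ := id hy
  obtain ⟨u, hu, rfl⟩ := id hw
  simp only [AffineMap.lineMap_apply] at hy hw ⊢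
  rcases wbtw_or_wbtw_smul_vadd_of_nonneg x (z -ᵥ x) hu.1 ht.1 with h | h
  · exact Or.inl h
  · exact Or.inr (hw.trans_left_right h)

variable {E : Type*} [NormedAddCommGroup E] [NormedSpace ℝ E]

theorem exists_mem_segment_dist_lt_lt {x z : E} {δ ε : ℝ} (hδ : 0 < δ) (hε : 0 < ε)
    (h : dist x z < ε + δ) : ∃ y ∈ segment ℝ x z, dist x y < δ ∧ dist y z < ε := by
  have hεδ : 0 < ε + δ := add_pos hε hδ
  have ht : δ / (ε + δ) ∈ Icc (0 : ℝ) 1 :=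
    ⟨by positivity, (div_le_one hεδ).2 (by linarith)⟩
  have h1t : 1 - δ / (ε + δ) = ε / (ε + δ) := by field_simp; ring
  refine ⟨AffineMap.lineMap x z (δ / (ε + δ)), lineMap_mem_segment ℝ x z ht, ?_, ?_⟩
  · rw [dist_left_lineMap, Real.norm_of_nonneg ht.1, div_mul_comm]
    exact mul_lt_of_lt_one_left hδ ((div_lt_one hεδ).2 h)
  · rw [dist_lineMap_right, h1t, Real.norm_of_nonneg (by positivity), div_mul_comm]
    exact mul_lt_of_lt_one_left hε ((div_lt_one hεδ).2 h)

end Segments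

section Continuation

variable {X E : Type*} [TopologicalSpace X] [T2Space X]
  [NormedAddCommGroup E] [NormedSpace ℝ E] {q : X → E}

theorem IsLocalHomeomorph.exists_section_of_starConvex_cover (hq : IsLocalHomeomorph q)
    {W : Set E} {c : E} {x : X} (hc : c ∈ W)
    (hW : ∀ z ∈ W, ∃ T : Set E, IsOpen T ∧ StarConvex ℝ c T ∧ c ∈ T ∧ z ∈ T ∧
      ∃ g, IsContinuousSectionOn q g T ∧ g c = x) :
    ∃ G, IsContinuousSectionOn q G W ∧ G c = x := by
  have : Nonempty X := ⟨x⟩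
  choose! T hTo hTc hcT hzT g hg hgc using hW
  have hagree : ∀ z ∈ W, ∀ w ∈ W, w ∈ T z → g w w = g z w := fun z hz w hw hwz =>
    have hcwz : c ∈ T w ∩ T z := ⟨hcT w hw, hcT z hz⟩
    hq.eqOn_of_isPreconnected
      (((hTc w hw).inter (hTc z hz)).isPathConnected hcwz).isConnected.isPreconnected
      ((hg w hw).mono inter_subset_left) ((hg z hz).mono inter_subset_right)
      hcwz ((hgc w hw).trans (hgc z hz).symm) ⟨hzT w hw, hwz⟩
  refine ⟨fun z => g z z, ⟨fun z hz => ?_, fun z hz => (hg z hz).2 (hzT z hz)⟩, hgc c hc⟩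
  have hTz : T z ∈ nhds z := (hTo z hz).mem_nhds (hzT z hz)
  refine (((hg z hz).1.continuousAt hTz).continuousWithinAt).congr_of_eventuallyEq ?_
    (hagree z hz z hz (hzT z hz))
  filter_upwards [self_mem_nhdsWithin, mem_nhdsWithin_of_mem_nhds hTz] with w hw hwz
  exact hagree z hz w hw hwz

theorem IsLocalHomeomorph.exists_convex_section_of_mem_segment (hq : IsLocalHomeomorph q)
    {f : E → X} {c e p : E} {s ρ : ℝ} (hf : IsContinuousSectionOn q f (ball c s))
    (hp : p ∈ segment ℝ c e) (hpc : p ∈ ball c s) (hep : e ∈ ball p ρ)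
    (hball : HasBall q (f p) ρ) :
    ∃ T : Set E, IsOpen T ∧ Convex ℝ T ∧ c ∈ T ∧ e ∈ T ∧
      ∃ g, IsContinuousSectionOn q g T ∧ g c = f c := by
  have : Nonempty X := ⟨f p⟩
  obtain ⟨V, hVo, hfpV, hVinj, hVim⟩ := hball
  rw [hf.2 hpc] at hVim
  obtain ⟨g, hg, -, hgq⟩ := hq.exists_section_of_injOn hVo hVinj
  rw [hVim] at hg
  have hgp : g p = f p := by simpa only [hf.2 hpc] using hgq hfpV
  obtain ⟨G, hG, hGf⟩ := hq.exists_section_union isOpen_ball isOpen_ball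
    ((convex_ball c s).inter (convex_ball p ρ)).isPreconnected hf hg
    ⟨hpc, mem_ball_self (pos_of_mem_ball hep)⟩ hgp.symm
  have hseg : segment ℝ c e ⊆ ball c s ∪ ball p ρ :=
    (segment_subset_union_segment hp).trans <| union_subset_union
      ((convex_ball c s).segment_subset (mem_ball_self (pos_of_mem_ball hpc)) hpc)
      ((convex_ball p ρ).segment_subset (mem_ball_self (pos_of_mem_ball hep)) hep)
  have hcompact : IsCompact (segment ℝ c e) :=
    convexHull_pair (𝕜 := ℝ) c e ▸ (toFinite {c, e}).isCompact_convexHull ℝ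
  obtain ⟨ε, hε, hthick⟩ :=
    hcompact.exists_thickening_subset_open (isOpen_ball.union isOpen_ball) hseg
  exact ⟨thickening ε (segment ℝ c e), isOpen_thickening, (convex_segment c e).thickening ε,
    self_subset_thickening hε _ (left_mem_segment ℝ c e),
    self_subset_thickening hε _ (right_mem_segment ℝ c e), G, hG.mono hthick,
    hGf (mem_ball_self (pos_of_mem_ball hpc))⟩

end Continuation

theorem stmt_8_general {X E : Type*} [TopologicalSpace X] [T2Space X]
    [NormedAddCommGroup E] [NormedSpace ℂ E]
    (q : X → E) (hq : IsLocalHomeomorph q)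
    (A : Set X)
    (δ : ℝ) (hδ : 0 < δ) (hdA : ∀ a ∈ A, ∀ ρ : ℝ, 0 < ρ → ρ < δ → HasBall q a ρ)
    (x : X) (s : ℝ) (hs : 0 < s)
    (U : Set X) (hUopen : IsOpen U) (hxU : x ∈ U) (hUinj : Set.InjOn q U)
    (hUball : q '' U = Metric.ball (q x) s) (hUA : U ⊆ A) :
    HasBall q x (s + δ) := by
  have : Nonempty X := ⟨x⟩
  obtain ⟨f, hf, hfU, hfq⟩ := hq.exists_section_of_injOn hUopen hUinj
  rw [hUball] at hf hfU
  have hlocal : ∀ e ∈ ball (q x) (s + δ), ∃ T : Set E, IsOpen T ∧ StarConvex ℝ (q x) T ∧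
      q x ∈ T ∧ e ∈ T ∧ ∃ g, IsContinuousSectionOn q g T ∧ g (q x) = x := by
    intro e he
    obtain ⟨p, hp, hpc, hpe⟩ :=
      exists_mem_segment_dist_lt_lt hs hδ (by rwa [mem_ball', add_comm] at he)
    obtain ⟨ρ, hpeρ, hρδ⟩ := exists_between hpe
    obtain ⟨T, hTo, hTc, hcT, heT, g, hg, hgc⟩ :=
      hq.exists_convex_section_of_mem_segment hf hp (mem_ball'.2 hpc) (mem_ball'.2 hpeρ)
        (hdA _ (hUA (hfU (mem_ball'.2 hpc))) ρ (dist_nonneg.trans_lt hpeρ) hρδ)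
    exact ⟨T, hTo, hTc.starConvex hcT, hcT, heT, g, hg, hgc.trans (hfq hxU)⟩
  obtain ⟨G, hG, hGx⟩ :=
    hq.exists_section_of_starConvex_cover (mem_ball_self (by positivity)) hlocal
  exact hq.hasBall_of_section (by positivity) hG hGx

/-- Let `(X,q)` be a Riemann domain spread over a Banach space `E` (`X` Hausdorff and `q` a
local homeomorphism), let `A ⊆ X` be an open `X`-bounded set with `d_X(A) ≥ δ > 0`
(every point of `A` has balls of every radius `< δ`), and suppose the ball `B_s(x)` exists
and is contained in `A`.  Then the ball `B_{s+δ}(x)` exists. -/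
theorem stmt_8 {X E : Type*} [TopologicalSpace X] [T2Space X]
    [NormedAddCommGroup E] [NormedSpace ℂ E] [CompleteSpace E]
    (q : X → E) (hq : IsLocalHomeomorph q)
    (A : Set X) (hAopen : IsOpen A) (hAbd : Bornology.IsBounded (q '' A))
    (δ : ℝ) (hδ : 0 < δ) (hdA : ∀ a ∈ A, ∀ ρ : ℝ, 0 < ρ → ρ < δ → HasBall q a ρ)
    (x : X) (s : ℝ) (hs : 0 < s)
    (U : Set X) (hUopen : IsOpen U) (hxU : x ∈ U) (hUinj : Set.InjOn q U)
    (hUball : q '' U = Metric.ball (q x) s) (hUA : U ⊆ A) :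
    HasBall q x (s + δ) :=
  stmt_8_general q hq A δ hδ hdA x s hs U hUopen hxU hUinj hUball hUA
end

section
/- Let (X,q) be a Riemann domain over a Banach space E, A an open X-bounded set, δ = d_X(A) > 0, and B_s(x) ⊂ A. Let C = ∪_{y ∈ B_s(x)} B_{δ/4}(y). Then q restricted to C is injective, and q(C) = B_E(q(x), s + δ/4). -/
open Function Set

section Helpers

variable {X E : Type*} [TopologicalSpace X] [T2Space X] [TopologicalSpace E]
  {q : X → E}

/-- The local section given by `invFunOn` on an injectivity set is continuous on the image. -/
lemma invFunOn_continuousOn [Nonempty X] (hq : IsLocalHomeomorph q) {U : Set X}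
    (hU : IsOpen U) (hinj : Set.InjOn q U) :
    ContinuousOn (Function.invFunOn q U) (q '' U) := by
  rw [continuousOn_iff']
  intro O hO
  refine ⟨q '' (O ∩ U), hq.isOpenMap _ (hO.inter hU), ?_⟩
  ext w
  constructor
  · rintro ⟨hwO, u, hu, rfl⟩
    refine ⟨⟨invFunOn q U (q u), ⟨hwO, invFunOn_apply_mem hu⟩, invFunOn_apply_eq hu⟩,
      ⟨u, hu, rfl⟩⟩
  · rintro ⟨⟨u, ⟨huO, huU⟩, rfl⟩, hw⟩
    refine ⟨?_, ⟨u, huU, rfl⟩⟩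
    have : invFunOn q U (q u) = u := hinj.leftInvOn_invFunOn huU
    simpa [this] using huO

/-- Uniqueness of continuous sections of a local homeomorphism on a preconnected set. -/
lemma section_unique [Nonempty X] {Y : Type*} [TopologicalSpace Y]
    (hq : IsLocalHomeomorph q) {S : Set Y} (hS : IsPreconnected S)
    {f g : Y → X} (hf : ContinuousOn f S) (hg : ContinuousOn g S)
    (hqfg : ∀ y ∈ S, q (f y) = q (g y)) {y0 : Y} (hy0 : y0 ∈ S) (h0 : f y0 = g y0) :
    Set.EqOn f g S := by
  haveI : PreconnectedSpace S := Subtype.preconnectedSpace hS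
  have hf' : Continuous (S.restrict f) := hf.restrict
  have hg' : Continuous (S.restrict g) := hg.restrict
  set T : Set S := {p | S.restrict f p = S.restrict g p} with hT
  have hclosed : IsClosed T := isClosed_eq hf' hg'
  have hopen : IsOpen T := by
    rw [isOpen_iff_mem_nhds]
    rintro p hp
    obtain ⟨e, hfe, heq⟩ := hq (f p.1)
    have hN : (S.restrict f) ⁻¹' e.source ∩ (S.restrict g) ⁻¹' e.source ∈ nhds p := by
      refine Filter.inter_mem ?_ ?_
      · exact hf'.continuousAt.preimage_mem_nhds (e.open_source.mem_nhds hfe)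
      · refine hg'.continuousAt.preimage_mem_nhds (e.open_source.mem_nhds ?_)
        have : S.restrict g p = f p.1 := hp.symm
        rw [this]; exact hfe
    refine Filter.mem_of_superset hN ?_
    rintro r ⟨hr1, hr2⟩
    have : e (f r.1) = e (g r.1) := by
      rw [← congrFun heq (f r.1), ← congrFun heq (g r.1)]
      exact hqfg r.1 r.2
    exact e.injOn hr1 hr2 this
  have hne : T.Nonempty := ⟨⟨y0, hy0⟩, h0⟩
  have : T = Set.univ := IsClopen.eq_univ ⟨hclosed, hopen⟩ hne
  intro y hy
  have : (⟨y, hy⟩ : S) ∈ T := this ▸ Set.mem_univ _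
  exact this

/-- If two injectivity sets have a common point over a preconnected base contained in both
images, the sections agree. -/
lemma eqOn_invFunOn [Nonempty X] (hq : IsLocalHomeomorph q)
    {U V : Set X} (hUinj : Set.InjOn q U) (hVinj : Set.InjOn q V)
    (hUo : IsOpen U) (hVo : IsOpen V)
    {S : Set E} (hS : IsPreconnected S) (hSU : S ⊆ q '' U) (hSV : S ⊆ q '' V)
    {p : X} (hpU : p ∈ U) (hpV : p ∈ V) (hpS : q p ∈ S) :
    Set.EqOn (Function.invFunOn q U) (Function.invFunOn q V) S := by
  refine section_unique hq hS
    ((invFunOn_continuousOn hq hUo hUinj).mono hSU)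
    ((invFunOn_continuousOn hq hVo hVinj).mono hSV)
    (fun w hw => ?_) hpS ?_
  · obtain ⟨u, hu, rfl⟩ := hSU hw
    obtain ⟨v, hv, hvw⟩ := hSV hw
    rw [Function.invFunOn_apply_eq (f := q) hu,
      Function.invFunOn_eq (f := q) ⟨v, hv, hvw⟩]
  · rw [hUinj.leftInvOn_invFunOn hpU, hVinj.leftInvOn_invFunOn hpV]

/-- Nesting of balls: a smaller "ball" sharing a point with a larger one is contained in it. -/
lemma ball_subset_ball' [Nonempty X] (hq : IsLocalHomeomorph q)
    {U V : Set X} (hUo : IsOpen U) (hVo : IsOpen V)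
    (hUinj : Set.InjOn q U) (hVinj : Set.InjOn q V)
    (hD : q '' U ⊆ q '' V) (hDc : IsPreconnected (q '' U))
    {p : X} (hpU : p ∈ U) (hpV : p ∈ V) : U ⊆ V := by
  have heq := eqOn_invFunOn hq hUinj hVinj hUo hVo hDc (subset_refl _) hD hpU hpV
    ⟨p, hpU, rfl⟩
  intro u hu
  have h1 : invFunOn q U (q u) = u := hUinj.leftInvOn_invFunOn hu
  have h2 : invFunOn q V (q u) ∈ V := invFunOn_mem (by
    obtain ⟨v, hv, hvq⟩ := hD ⟨u, hu, rfl⟩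
    exact ⟨v, hv, hvq⟩)
  have := heq ⟨u, hu, rfl⟩
  rw [h1] at this
  rw [this]
  exact h2

end Helpers

/-- Let `(X,q)` be a Riemann domain over a Banach space `E`, `A` an open `X`-bounded set with
`δ = d_X(A) > 0`, and `Bs = B_s(x) ⊆ A` a ball at `x`.  For `y ∈ Bs` let `B y` be the ball
`B_{δ/4}(y)`, and set `C = ∪_{y ∈ Bs} B y`.  Then `q` restricted to `C` is injective and
`q(C) = B_E(q x, s + δ/4)`. -/
theorem stmt_9 {X E : Type*} [TopologicalSpace X] [T2Space X]
    [NormedAddCommGroup E] [NormedSpace ℂ E] [CompleteSpace E]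
    (q : X → E) (hq : IsLocalHomeomorph q)
    (A : Set X) (hAopen : IsOpen A) (hAbd : Bornology.IsBounded (q '' A))
    (δ : ℝ) (hδ : 0 < δ) (hdA : ∀ a ∈ A, ∀ ρ : ℝ, 0 < ρ → ρ < δ → HasBall q a ρ)
    (hdAδ : ∀ a ∈ A, HasBall q a δ)
    (x : X) (s : ℝ) (hs : 0 < s)
    (Bs : Set X) (hBsopen : IsOpen Bs) (hxBs : x ∈ Bs) (hBsinj : Set.InjOn q Bs)
    (hBsball : q '' Bs = Metric.ball (q x) s) (hBsA : Bs ⊆ A)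
    (B : X → Set X)
    (hB : ∀ y ∈ Bs, IsOpen (B y) ∧ y ∈ B y ∧ Set.InjOn q (B y) ∧
      q '' B y = Metric.ball (q y) (δ / 4)) :
    Set.InjOn q (⋃ y ∈ Bs, B y) ∧ q '' (⋃ y ∈ Bs, B y) = Metric.ball (q x) (s + δ / 4) := by
  haveI : Nonempty X := ⟨x⟩
  have hδ4 : (0 : ℝ) < δ / 4 := by linarith
  -- distance of centers to q x
  have hcenter : ∀ y ∈ Bs, dist (q y) (q x) < s := fun y hy => by
    have : q y ∈ Metric.ball (q x) s := hBsball ▸ ⟨y, hy, rfl⟩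
    simpa [Metric.mem_ball] using this
  constructor
  · -- injectivity
    intro z1 hz1 z2 hz2 hqz
    simp only [Set.mem_iUnion] at hz1 hz2
    obtain ⟨y1, hy1, hz1'⟩ := hz1
    obtain ⟨y2, hy2, hz2'⟩ := hz2
    obtain ⟨hB1o, hy1B1, hB1inj, hB1im⟩ := hB y1 hy1
    obtain ⟨hB2o, hy2B2, hB2inj, hB2im⟩ := hB y2 hy2
    have hd1 : dist (q z1) (q y1) < δ / 4 := by
      have : q z1 ∈ Metric.ball (q y1) (δ / 4) := hB1im ▸ ⟨z1, hz1', rfl⟩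
      simpa [Metric.mem_ball] using this
    have hd2 : dist (q z2) (q y2) < δ / 4 := by
      have : q z2 ∈ Metric.ball (q y2) (δ / 4) := hB2im ▸ ⟨z2, hz2', rfl⟩
      simpa [Metric.mem_ball] using this
    have hdy : dist (q y1) (q y2) < δ / 2 := by
      calc dist (q y1) (q y2) ≤ dist (q y1) (q z1) + dist (q z1) (q y2) := dist_triangle _ _ _
        _ = dist (q z1) (q y1) + dist (q z2) (q y2) := by rw [dist_comm, hqz]
        _ < δ / 4 + δ / 4 := by linarith
        _ = δ / 2 := by ring
    obtain ⟨V, hVo, hy1V, hVinj, hVim⟩ :=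
      hdA y1 (hBsA hy1) (3 * δ / 4) (by linarith) (by linarith)
    -- B y1 ⊆ V
    have hB1V : B y1 ⊆ V := by
      refine ball_subset_ball' hq hB1o hVo hB1inj hVinj ?_ ?_ hy1B1 hy1V
      · rw [hB1im, hVim]
        exact Metric.ball_subset_ball (by linarith)
      · rw [hB1im]
        exact (convex_ball _ _).isPreconnected
    -- y2 ∈ V via lifting the segment from q y1 to q y2
    have hseg : IsPreconnected (segment ℝ (q y1) (q y2)) :=
      (convex_segment _ _).isPreconnected
    have hsegBs : segment ℝ (q y1) (q y2) ⊆ q '' Bs := by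
      rw [hBsball]
      exact (convex_ball _ _).segment_subset
        (by simpa [Metric.mem_ball] using hcenter y1 hy1)
        (by simpa [Metric.mem_ball] using hcenter y2 hy2)
    have hsegV : segment ℝ (q y1) (q y2) ⊆ q '' V := by
      rw [hVim]
      refine (convex_ball _ _).segment_subset ?_ ?_
      · simpa [Metric.mem_ball] using (by linarith : (0:ℝ) < 3 * δ / 4)
      · simp only [Metric.mem_ball]
        rw [dist_comm]
        linarith
    have heq := eqOn_invFunOn hq hBsinj hVinj hBsopen hVo hseg hsegBs hsegV hy1 hy1V
      (left_mem_segment ℝ _ _)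
    have hy2V : y2 ∈ V := by
      have h1 : Function.invFunOn q Bs (q y2) = y2 := hBsinj.leftInvOn_invFunOn hy2
      have h2 := heq (right_mem_segment ℝ (q y1) (q y2))
      rw [h1] at h2
      rw [h2]
      exact Function.invFunOn_mem (by
        obtain ⟨v, hv, hvq⟩ := hsegV (right_mem_segment ℝ (q y1) (q y2))
        exact ⟨v, hv, hvq⟩)
    -- B y2 ⊆ V
    have hB2V : B y2 ⊆ V := by
      refine ball_subset_ball' hq hB2o hVo hB2inj hVinj ?_ ?_ hy2B2 hy2V
      · rw [hB2im, hVim]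
        intro u hu
        simp only [Metric.mem_ball] at hu ⊢
        calc dist u (q y1) ≤ dist u (q y2) + dist (q y2) (q y1) := dist_triangle _ _ _
          _ < δ / 4 + δ / 2 := by rw [dist_comm] at hdy; linarith
          _ = 3 * δ / 4 := by ring
      · rw [hB2im]
        exact (convex_ball _ _).isPreconnected
    exact hVinj (hB1V hz1') (hB2V hz2') hqz
  · -- image
    ext w
    simp only [Set.mem_image, Set.mem_iUnion]
    constructor
    · rintro ⟨z, ⟨y, hy, hz⟩, rfl⟩
      obtain ⟨_, _, _, hBim⟩ := hB y hy
      have hd : dist (q z) (q y) < δ / 4 := by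
        have : q z ∈ Metric.ball (q y) (δ / 4) := hBim ▸ ⟨z, hz, rfl⟩
        simpa [Metric.mem_ball] using this
      have := hcenter y hy
      simp only [Metric.mem_ball]
      calc dist (q z) (q x) ≤ dist (q z) (q y) + dist (q y) (q x) := dist_triangle _ _ _
        _ < δ / 4 + s := by linarith
        _ = s + δ / 4 := by ring
    · intro hw
      simp only [Metric.mem_ball] at hw
      set r := dist w (q x) with hr
      by_cases hrs : r < s
      · -- w is already in the image of Bs
        have : w ∈ q '' Bs := hBsball ▸ (by simpa [Metric.mem_ball] using hrs)
        obtain ⟨y, hy, rfl⟩ := this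
        obtain ⟨_, hyB, _, hBim⟩ := hB y hy
        exact ⟨y, ⟨y, hy, hyB⟩, rfl⟩
      · push_neg at hrs
        have hr0 : 0 < r := lt_of_lt_of_le hs hrs
        set t : ℝ := max ((r + s - δ / 4) / (2 * r)) 0 with ht
        have ht0 : 0 ≤ t := le_max_right _ _
        have ht1 : t ≤ 1 := by
          apply max_le
          · rw [div_le_one (by linarith)]
            linarith
          · linarith
        have htr : t * r < s := by
          rcases max_cases ((r + s - δ / 4) / (2 * r)) 0 with ⟨h1, _⟩ | ⟨h1, _⟩ <;>
            rw [ht, h1]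
          · rw [div_mul_eq_mul_div, mul_comm]
            rw [div_lt_iff₀ (by linarith : (0:ℝ) < 2 * r)]
            nlinarith
          · simpa using hs
        have htr2 : (1 - t) * r < δ / 4 := by
          have hle : (r + s - δ / 4) / (2 * r) ≤ t := le_max_left _ _
          have : (1 - (r + s - δ / 4) / (2 * r)) * r < δ / 4 := by
            have hexp : (1 - (r + s - δ / 4) / (2 * r)) * r = (r - s + δ / 4) / 2 := by
              field_simp
              ring
            rw [hexp]
            linarith
          nlinarith [mul_le_mul_of_nonneg_right hle (le_of_lt hr0)]
        set w' : E := q x + t • (w - q x) with hw'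
        have hdw' : dist w' (q x) = t * r := by
          rw [hw', dist_eq_norm]
          simp only [add_sub_cancel_left]
          rw [norm_smul, Real.norm_eq_abs, abs_of_nonneg ht0, hr, dist_eq_norm]
        have hw'Bs : w' ∈ q '' Bs := by
          rw [hBsball]
          simp only [Metric.mem_ball]
          rw [hdw']
          exact htr
        obtain ⟨y, hy, hqy⟩ := hw'Bs
        obtain ⟨_, hyB, _, hBim⟩ := hB y hy
        have hdww' : dist w w' = (1 - t) * r := by
          rw [hw', dist_eq_norm]
          have : w - (q x + t • (w - q x)) = (1 - t) • (w - q x) := by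
            rw [sub_smul, one_smul]
            abel
          rw [this, norm_smul, Real.norm_eq_abs, abs_of_nonneg (by linarith : (0:ℝ) ≤ 1 - t),
            hr, dist_eq_norm]
        have : w ∈ q '' B y := by
          rw [hBim]
          simp only [Metric.mem_ball]
          rw [hqy, hdww']
          exact htr2
        obtain ⟨z, hz, rfl⟩ := this
        exact ⟨z, ⟨y, hy, hz⟩, rfl⟩
end

section
/- Let (A_k)_{k≥0} be a sequence of Banach spaces with a bilinear multiplication A_k × A_l → A_{k+l} satisfying ‖P·Q‖_{A_{k+l}} ≤ c_{k,l}‖P‖_{A_k}‖Q‖_{A_l} with c_{k,l} ≤ e²√(kl/(k+l)). For formal series f = Σ P_k, g = Σ Q_k define fg via the Cauchy product Σ_n Σ_{k=0}^n P_k Q_{n−k}. Then for 0 < s and ε > 0 there is a constant c > 0 (depending on s, ε but not on f, g) such that p_s(fg) ≤ c · p_s(g) · p_{s+ε}(f), where p_t(f) = Σ_k t^k ‖P_k‖_{A_k}. -/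
/-!
Since `s < s + ε`, the weight `√k` is absorbed by the gap between the radii:
`√k · s ^ k ≤ C · (s + ε) ^ k` for a constant `C` depending only on `s` and `ε`.  As
`k (n - k) / n ≤ k`, each term of the bound on `s ^ n ‖R n‖` is then dominated by
the Cauchy product of `e² C (s + ε) ^ k ‖P k‖` and `s ^ k ‖Q k‖`, whose sum is the product
of the two sums.
-/

open Finset Real

theorem exists_sqrt_mul_pow_le_mul_pow {s t : ℝ} (hs : 0 ≤ s) (hst : s < t) :
    ∃ C : ℝ, 0 < C ∧ ∀ k : ℕ, √k * s ^ k ≤ C * t ^ k := by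
  have ht : 0 < t := hs.trans_lt hst
  have hr : s / t < 1 := (div_lt_one ht).mpr hst
  obtain ⟨C, hC⟩ := (tendsto_self_mul_const_pow_of_lt_one (by positivity) hr).bddAbove_range
  refine ⟨max C 1, lt_max_of_lt_right one_pos, fun k => ?_⟩
  have hsqrt : √(k : ℝ) ≤ k := by
    rcases Nat.eq_zero_or_pos k with rfl | hk
    · simp
    · have hk' : (1 : ℝ) ≤ k := Nat.one_le_cast.mpr hk
      exact sqrt_le_left (by positivity) |>.mpr (by nlinarith)
  calc √k * s ^ k = √k * (s / t) ^ k * t ^ k := by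
        rw [div_pow, mul_assoc, div_mul_cancel₀ _ (by positivity)]
    _ ≤ k * (s / t) ^ k * t ^ k := by gcongr
    _ ≤ max C 1 * t ^ k := by gcongr; exact (hC ⟨k, rfl⟩).trans (le_max_left _ _)

theorem div_mul_sub_le_self (k n : ℕ) : (k : ℝ) * (n - k : ℕ) / n ≤ k := by
  rcases Nat.eq_zero_or_pos n with rfl | hn
  · simp
  · rw [div_le_iff₀ (by positivity)]
    gcongr
    exact_mod_cast Nat.sub_le n k

theorem tsum_le_tsum_mul_tsum_of_le_sum_range {u a b : ℕ → ℝ} (hu : ∀ n, 0 ≤ u n)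
    (ha : ∀ n, 0 ≤ a n) (hb : ∀ n, 0 ≤ b n) (has : Summable a) (hbs : Summable b)
    (h : ∀ n, u n ≤ ∑ k ∈ range (n + 1), a k * b (n - k)) :
    ∑' n, u n ≤ (∑' n, a n) * ∑' n, b n := by
  have ha' : Summable (‖a ·‖) := by simpa only [norm_of_nonneg (ha _)] using has
  have hb' : Summable (‖b ·‖) := by simpa only [norm_of_nonneg (hb _)] using hbs
  have hab := (summable_norm_sum_mul_range_of_summable_norm ha' hb').of_norm
  rw [tsum_mul_tsum_eq_tsum_sum_range_of_summable_norm ha' hb']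
  exact (hab.of_nonneg_of_le hu h).tsum_le_tsum h hab

theorem stmt_11_general (A : ℕ → Type*) [∀ k, NormedAddCommGroup (A k)]
    (s ε : ℝ) (hs : 0 < s) (hε : 0 < ε) :
    ∃ c : ℝ, 0 < c ∧
      ∀ (P Q R : ∀ n, A n),
        (∀ n, ‖R n‖ ≤ ∑ k ∈ Finset.range (n + 1),
            Real.exp 1 ^ 2 * Real.sqrt ((k : ℝ) * (n - k : ℕ) / n) * ‖P k‖ * ‖Q (n - k)‖) →
        (Summable fun k => (s + ε) ^ k * ‖P k‖) →
        (Summable fun k => s ^ k * ‖Q k‖) →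
        ∑' n, s ^ n * ‖R n‖ ≤ c * (∑' k, s ^ k * ‖Q k‖) * (∑' k, (s + ε) ^ k * ‖P k‖) := by
  obtain ⟨C, hC, hsqrt⟩ := exists_sqrt_mul_pow_le_mul_pow hs.le (lt_add_of_pos_right s hε)
  refine ⟨exp 1 ^ 2 * C, by positivity, fun P Q R hR hP hQ => ?_⟩
  have hterm : ∀ n, ∀ k ∈ range (n + 1), s ^ n *
      (exp 1 ^ 2 * √((k : ℝ) * (n - k : ℕ) / n) * ‖P k‖ * ‖Q (n - k)‖) ≤
      exp 1 ^ 2 * C * ((s + ε) ^ k * ‖P k‖) * (s ^ (n - k) * ‖Q (n - k)‖) := by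
    intro n k hk
    have hsk : √((k : ℝ) * (n - k : ℕ) / n) * s ^ k ≤ C * (s + ε) ^ k := by
      refine le_trans ?_ (hsqrt k)
      gcongr
      exact div_mul_sub_le_self k n
    rw [← pow_mul_pow_sub s (mem_range_succ_iff.mp hk)]
    calc _ = exp 1 ^ 2 * (√((k : ℝ) * (n - k : ℕ) / n) * s ^ k) * ‖P k‖ *
          (s ^ (n - k) * ‖Q (n - k)‖) := by ring
      _ ≤ exp 1 ^ 2 * (C * (s + ε) ^ k) * ‖P k‖ * (s ^ (n - k) * ‖Q (n - k)‖) := by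
        gcongr
      _ = _ := by ring
  calc ∑' n, s ^ n * ‖R n‖
      ≤ (∑' k, exp 1 ^ 2 * C * ((s + ε) ^ k * ‖P k‖)) * ∑' k, s ^ k * ‖Q k‖ := by
        refine tsum_le_tsum_mul_tsum_of_le_sum_range (fun n => by positivity)
          (fun k => by positivity) (fun k => by positivity) (hP.mul_left _) hQ fun n => ?_
        exact (mul_le_mul_of_nonneg_left (hR n) (by positivity)).trans
          ((mul_sum ..).trans_le (sum_le_sum (hterm n)))
    _ = exp 1 ^ 2 * C * (∑' k, s ^ k * ‖Q k‖) * ∑' k, (s + ε) ^ k * ‖P k‖ := by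
        rw [tsum_mul_left]; ring

/-- Let `(A_k)` be a graded sequence of Banach spaces whose multiplication satisfies
`‖P_k · Q_l‖ ≤ e²√(kl/(k+l)) ‖P_k‖ ‖Q_l‖`.  For formal series `f = Σ P_k`, `g = Σ Q_k`,
the Cauchy product coefficients `R_n = Σ_{k=0}^n P_k Q_{n-k}` satisfy
`‖R_n‖ ≤ Σ_{k=0}^n e²√(k(n-k)/n) ‖P_k‖ ‖Q_{n-k}‖`, and then for all `s, ε > 0` there is
`c > 0` (depending only on `s` and `ε`) such that `p_s(fg) ≤ c · p_s(g) · p_{s+ε}(f)`,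
where `p_t(f) = Σ_k t^k ‖P_k‖`. -/
theorem stmt_11 (A : ℕ → Type*) [∀ k, NormedAddCommGroup (A k)] [∀ k, NormedSpace ℂ (A k)]
    [∀ k, CompleteSpace (A k)] (s ε : ℝ) (hs : 0 < s) (hε : 0 < ε) :
    ∃ c : ℝ, 0 < c ∧
      ∀ (P Q R : ∀ n, A n),
        (∀ n, ‖R n‖ ≤ ∑ k ∈ Finset.range (n + 1),
            Real.exp 1 ^ 2 * Real.sqrt ((k : ℝ) * (n - k : ℕ) / n) * ‖P k‖ * ‖Q (n - k)‖) →
        (Summable fun k => (s + ε) ^ k * ‖P k‖) →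
        (Summable fun k => s ^ k * ‖Q k‖) →
        ∑' n, s ^ n * ‖R n‖ ≤ c * (∑' k, s ^ k * ‖Q k‖) * (∑' k, (s + ε) ^ k * ‖P k‖) :=
  stmt_11_general A s ε hs hε
end

section
/- For 1 < p < ∞ and the complex interpolation space S_p^k = [P_N^k(H), P_A^k(H)]_θ with p(1−θ)=1 on a Hilbert space H: if the product maps P_N^k × P_N^l → P_N^{k+l} and P_A^k × P_A^l → P_A^{k+l} are bounded bilinear with norms c_{k,l}^N and c_{k,l}^A respectively, then the product map S_p^k × S_p^l → S_p^{k+l} is bounded bilinear with norm at most (c_{k,l}^N)^{1−θ}(c_{k,l}^A)^θ. -/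
open Complex in
/-- The complex interpolation norm `[n₀, n₁]_θ` of the compatible couple of norms `n₀, n₁`
on a common (dense) subspace `V`, computed by Calderón's formula over finite-rank analytic
functions `F(z) = Σᵢ φᵢ(z) vᵢ` on the closed strip `0 ≤ Re z ≤ 1` (bounded, continuous on
the closed strip, analytic in its interior) with `F(θ) = x`:
`inf { max-boundary-bound M }`. -/
noncomputable def interpNorm {V : Type*} [AddCommGroup V] [Module ℂ V]
    (n0 n1 : V → ℝ) (θ : ℝ) (x : V) : ℝ :=
  sInf { M : ℝ | ∃ (N : ℕ) (φ : Fin N → ℂ → ℂ) (v : Fin N → V),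
    (∀ i, ContinuousOn (φ i) {z : ℂ | 0 ≤ z.re ∧ z.re ≤ 1} ∧
        DifferentiableOn ℂ (φ i) {z : ℂ | 0 < z.re ∧ z.re < 1} ∧
        ∃ B : ℝ, ∀ z ∈ {z : ℂ | 0 ≤ z.re ∧ z.re ≤ 1}, ‖φ i z‖ ≤ B) ∧
    (∑ i, φ i (θ : ℂ) • v i) = x ∧
    (∀ t : ℝ, n0 (∑ i, φ i (I * t) • v i) ≤ M) ∧
    (∀ t : ℝ, n1 (∑ i, φ i (1 + I * t) • v i) ≤ M) }

/-! Calderón's bilinear argument. If `F` and `G` are admissible functions on the strip with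
`F θ = x` and `G θ = y`, then `H z = exp ((z - θ) * (log cN - log cA)) • mul (F z) (G z)` is
admissible with `H θ = mul x y`. The scalar factor has modulus `cN ^ (-θ) * cA ^ θ` on `Re z = 0` and
`cN ^ (1 - θ) * cA ^ (θ - 1)` on `Re z = 1`, so that multiplied by `cN`, resp. `cA`, both equal
`cN ^ (1 - θ) * cA ^ θ`. Hence the boundary bounds of `H` are `cN ^ (1 - θ) * cA ^ θ` times the
products of those of `F` and `G`, and taking infima over `F` and `G` gives the estimate. -/

open Complex

def IsStripAdmissible (φ : ℂ → ℂ) : Prop :=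
  ContinuousOn φ {z : ℂ | 0 ≤ z.re ∧ z.re ≤ 1} ∧
    DifferentiableOn ℂ φ {z : ℂ | 0 < z.re ∧ z.re < 1} ∧
    ∃ B : ℝ, ∀ z ∈ {z : ℂ | 0 ≤ z.re ∧ z.re ≤ 1}, ‖φ z‖ ≤ B

namespace IsStripAdmissible

theorem const (c : ℂ) : IsStripAdmissible fun _ => c :=
  ⟨continuousOn_const, differentiableOn_const c, ‖c‖, fun _ _ => le_rfl⟩

theorem mul {φ ψ : ℂ → ℂ} (hφ : IsStripAdmissible φ) (hψ : IsStripAdmissible ψ) :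
    IsStripAdmissible (φ * ψ) := by
  obtain ⟨hφc, hφd, Bφ, hBφ⟩ := hφ
  obtain ⟨hψc, hψd, Bψ, hBψ⟩ := hψ
  refine ⟨hφc.mul hψc, hφd.mul hψd, Bφ * Bψ, fun z hz => ?_⟩
  rw [Pi.mul_apply, norm_mul]
  exact mul_le_mul (hBφ z hz) (hBψ z hz) (norm_nonneg _) ((norm_nonneg _).trans (hBφ z hz))

end IsStripAdmissible

theorem norm_cexp_sub_ofReal_mul_ofReal (θ L : ℝ) (z : ℂ) :
    ‖cexp ((z - θ) * L)‖ = Real.exp ((z.re - θ) * L) := by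
  simp [norm_exp, mul_re]

theorem isStripAdmissible_cexp_sub_ofReal_mul_ofReal (θ L : ℝ) :
    IsStripAdmissible fun z => cexp ((z - θ) * L) := by
  have hdiff : Differentiable ℂ fun z : ℂ => cexp ((z - θ) * L) := by fun_prop
  refine ⟨hdiff.continuous.continuousOn, hdiff.differentiableOn,
    Real.exp ((1 + |θ|) * |L|), fun z hz => ?_⟩
  rw [norm_cexp_sub_ofReal_mul_ofReal, Real.exp_le_exp]
  have hre : |z.re - θ| ≤ 1 + |θ| :=
    (abs_sub _ _).trans (by rw [abs_of_nonneg hz.1]; linarith [hz.2])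
  calc (z.re - θ) * L ≤ |(z.re - θ) * L| := le_abs_self _
    _ = |z.re - θ| * |L| := abs_mul _ _
    _ ≤ (1 + |θ|) * |L| := mul_le_mul_of_nonneg_right hre (abs_nonneg _)

section FiniteRank

variable {V W U : Type*} [AddCommGroup V] [Module ℂ V] [AddCommGroup W] [Module ℂ W]
  [AddCommGroup U] [Module ℂ U]

def IsFiniteRankAdmissible (F : ℂ → V) : Prop :=
  ∃ (N : ℕ) (φ : Fin N → ℂ → ℂ) (v : Fin N → V),
    (∀ i, IsStripAdmissible (φ i)) ∧ F = fun z => ∑ i, φ i z • v i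

theorem isFiniteRankAdmissible_sum_smul {ι : Type*} [Fintype ι] {φ : ι → ℂ → ℂ}
    (hφ : ∀ i, IsStripAdmissible (φ i)) (v : ι → V) :
    IsFiniteRankAdmissible fun z => ∑ i, φ i z • v i := by
  let e := Fintype.equivFin ι
  exact ⟨_, fun k => φ (e.symm k), fun k => v (e.symm k), fun k => hφ _,
    funext fun z => (e.symm.sum_comp fun i => φ i z • v i).symm⟩

theorem isFiniteRankAdmissible_const (x : V) : IsFiniteRankAdmissible fun _ : ℂ => x :=
  ⟨1, fun _ _ => 1, fun _ => x, fun _ => .const 1, by simp⟩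

theorem IsFiniteRankAdmissible.smul {g : ℂ → ℂ} {F : ℂ → V} (hg : IsStripAdmissible g)
    (hF : IsFiniteRankAdmissible F) : IsFiniteRankAdmissible fun z => g z • F z := by
  obtain ⟨N, φ, v, hφ, rfl⟩ := hF
  refine ⟨N, fun i => g * φ i, v, fun i => hg.mul (hφ i), funext fun z => ?_⟩
  simp [Finset.smul_sum, smul_smul]

theorem IsFiniteRankAdmissible.map₂ (B : V →ₗ[ℂ] W →ₗ[ℂ] U) {F : ℂ → V} {G : ℂ → W}
    (hF : IsFiniteRankAdmissible F) (hG : IsFiniteRankAdmissible G) :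
    IsFiniteRankAdmissible fun z => B (F z) (G z) := by
  obtain ⟨N, φ, v, hφ, rfl⟩ := hF
  obtain ⟨M, ψ, w, hψ, rfl⟩ := hG
  convert isFiniteRankAdmissible_sum_smul (fun ij : Fin N × Fin M => (hφ ij.1).mul (hψ ij.2))
    fun ij => B (v ij.1) (w ij.2) using 2 with z
  simp only [Fintype.sum_prod_type, map_sum, LinearMap.sum_apply, map_smul,
    LinearMap.smul_apply, Finset.smul_sum, smul_smul, Pi.mul_apply]
  rw [Finset.sum_comm]
  simp only [mul_comm]

end FiniteRank

section Interpolation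

variable {V : Type*} [AddCommGroup V] [Module ℂ V]

def interpBounds (n0 n1 : V → ℝ) (θ : ℝ) (x : V) : Set ℝ :=
  { M | ∃ F : ℂ → V, IsFiniteRankAdmissible F ∧ F θ = x ∧
    (∀ t : ℝ, n0 (F (I * t)) ≤ M) ∧ ∀ t : ℝ, n1 (F (1 + I * t)) ≤ M }

theorem interpNorm_eq_sInf_interpBounds (n0 n1 : V → ℝ) (θ : ℝ) (x : V) :
    interpNorm n0 n1 θ x = sInf (interpBounds n0 n1 θ x) := by
  refine congrArg sInf (Set.ext fun M => ⟨?_, ?_⟩)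
  · rintro ⟨N, φ, v, hφ, hx, h0, h1⟩
    exact ⟨_, ⟨N, φ, v, hφ, rfl⟩, hx, h0, h1⟩
  · rintro ⟨F, ⟨N, φ, v, hφ, rfl⟩, hx, h0, h1⟩
    exact ⟨N, φ, v, hφ, hx, h0, h1⟩

theorem nonneg_of_mem_interpBounds {n0 n1 : Seminorm ℂ V} {θ : ℝ} {x : V} {M : ℝ}
    (hM : M ∈ interpBounds (fun v => n0 v) (fun v => n1 v) θ x) : 0 ≤ M := by
  obtain ⟨F, -, -, h0, -⟩ := hM
  exact (apply_nonneg n0 _).trans (h0 0)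

theorem interpBounds_nonempty (n0 n1 : Seminorm ℂ V) (θ : ℝ) (x : V) :
    (interpBounds (fun v => n0 v) (fun v => n1 v) θ x).Nonempty :=
  ⟨max (n0 x) (n1 x), _, isFiniteRankAdmissible_const x, rfl,
    fun _ => le_max_left _ _, fun _ => le_max_right _ _⟩

end Interpolation

theorem le_mul_csInf {S : Set ℝ} {b c : ℝ} (hc : 0 ≤ c) (hS : S.Nonempty)
    (h : ∀ a ∈ S, b ≤ c * a) : b ≤ c * sInf S := by
  rw [← smul_eq_mul, ← Real.sInf_smul_of_nonneg hc]
  exact le_csInf hS.smul_set (by rintro _ ⟨a, ha, rfl⟩; exact h a ha)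

theorem csInf_le_mul_csInf_mul_csInf {S T U : Set ℝ} {K : ℝ} (hK : 0 ≤ K)
    (hS : S.Nonempty) (hT : T.Nonempty) (hS0 : ∀ a ∈ S, 0 ≤ a) (hT0 : ∀ b ∈ T, 0 ≤ b)
    (hU : BddBelow U) (h : ∀ a ∈ S, ∀ b ∈ T, K * (a * b) ∈ U) :
    sInf U ≤ K * (sInf S * sInf T) := by
  have hfix : ∀ b ∈ T, sInf U ≤ K * b * sInf S := fun b hb =>
    le_mul_csInf (mul_nonneg hK (hT0 b hb)) hS fun a ha =>
      (csInf_le hU (h a ha b hb)).trans_eq (by ring)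
  calc sInf U ≤ K * sInf S * sInf T :=
        le_mul_csInf (mul_nonneg hK (Real.sInf_nonneg hS0)) hT fun b hb =>
          (hfix b hb).trans_eq (by ring)
    _ = K * (sInf S * sInf T) := mul_assoc _ _ _

section Bilinear

variable {cN cA : ℝ}

theorem exp_neg_mul_log_sub_log_mul (hcN : 0 < cN) (hcA : 0 < cA) (θ : ℝ) :
    Real.exp (-θ * (Real.log cN - Real.log cA)) * cN = cN ^ (1 - θ) * cA ^ θ := by
  calc Real.exp (-θ * (Real.log cN - Real.log cA)) * cN
      = Real.exp (-θ * (Real.log cN - Real.log cA)) * Real.exp (Real.log cN) := by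
        rw [Real.exp_log hcN]
    _ = cN ^ (1 - θ) * cA ^ θ := by
        rw [Real.rpow_def_of_pos hcN, Real.rpow_def_of_pos hcA, ← Real.exp_add, ← Real.exp_add]
        ring_nf

theorem exp_one_sub_mul_log_sub_log_mul (hcN : 0 < cN) (hcA : 0 < cA) (θ : ℝ) :
    Real.exp ((1 - θ) * (Real.log cN - Real.log cA)) * cA = cN ^ (1 - θ) * cA ^ θ := by
  calc Real.exp ((1 - θ) * (Real.log cN - Real.log cA)) * cA
      = Real.exp ((1 - θ) * (Real.log cN - Real.log cA)) * Real.exp (Real.log cA) := by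
        rw [Real.exp_log hcA]
    _ = cN ^ (1 - θ) * cA ^ θ := by
        rw [Real.rpow_def_of_pos hcN, Real.rpow_def_of_pos hcA, ← Real.exp_add, ← Real.exp_add]
        ring_nf

variable {Vk Vl Vkl : Type*} [AddCommGroup Vk] [Module ℂ Vk] [AddCommGroup Vl] [Module ℂ Vl]
  [AddCommGroup Vkl] [Module ℂ Vkl]
  {nNk nAk : Seminorm ℂ Vk} {nNl nAl : Seminorm ℂ Vl} {nNkl nAkl : Seminorm ℂ Vkl}

theorem map₂_mem_interpBounds (B : Vk →ₗ[ℂ] Vl →ₗ[ℂ] Vkl) {θ : ℝ} (hcN : 0 < cN) (hcA : 0 < cA)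
    (hN : ∀ x y, nNkl (B x y) ≤ cN * nNk x * nNl y)
    (hA : ∀ x y, nAkl (B x y) ≤ cA * nAk x * nAl y) {x : Vk} {y : Vl} {Mx My : ℝ}
    (hx : Mx ∈ interpBounds (fun v => nNk v) (fun v => nAk v) θ x)
    (hy : My ∈ interpBounds (fun v => nNl v) (fun v => nAl v) θ y) :
    cN ^ (1 - θ) * cA ^ θ * (Mx * My) ∈
      interpBounds (fun v => nNkl v) (fun v => nAkl v) θ (B x y) := by
  obtain ⟨F, hF, hFθ, hF0, hF1⟩ := hx
  obtain ⟨G, hG, hGθ, hG0, hG1⟩ := hy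
  set L := Real.log cN - Real.log cA
  have boundary (n : Seminorm ℂ Vkl) (nk : Seminorm ℂ Vk) (nl : Seminorm ℂ Vl) (c : ℝ) (z : ℂ)
      (hc : 0 ≤ c) (hB : ∀ x y, n (B x y) ≤ c * nk x * nl y) (hFz : nk (F z) ≤ Mx)
      (hGz : nl (G z) ≤ My) :
      n (cexp ((z - θ) * L) • B (F z) (G z)) ≤ Real.exp ((z.re - θ) * L) * c * (Mx * My) := by
    rw [map_smul_eq_mul, norm_cexp_sub_ofReal_mul_ofReal, mul_assoc]
    refine mul_le_mul_of_nonneg_left ((hB _ _).trans ?_) (Real.exp_pos _).le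
    rw [mul_assoc]
    exact mul_le_mul_of_nonneg_left
      (mul_le_mul hFz hGz (apply_nonneg _ _) ((apply_nonneg _ _).trans hFz)) hc
  refine ⟨fun z => cexp ((z - θ) * L) • B (F z) (G z),
    (hF.map₂ B hG).smul (isStripAdmissible_cexp_sub_ofReal_mul_ofReal θ L),
    by simp [hFθ, hGθ], fun t => ?_, fun t => ?_⟩
  · refine (boundary nNkl nNk nNl cN _ hcN.le hN (hF0 t) (hG0 t)).trans_eq ?_
    simp only [mul_re, I_re, I_im, ofReal_re, ofReal_im, zero_mul, one_mul, sub_self, zero_sub,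
      neg_mul, ← exp_neg_mul_log_sub_log_mul hcN hcA θ, L]
  · refine (boundary nAkl nAk nAl cA _ hcA.le hA (hF1 t) (hG1 t)).trans_eq ?_
    simp only [add_re, one_re, mul_re, I_re, I_im, ofReal_re, ofReal_im, zero_mul, one_mul,
      sub_self, add_zero, ← exp_one_sub_mul_log_sub_log_mul hcN hcA θ, L]

end Bilinear

theorem stmt_19_general {Vk Vl Vkl : Type*}
    [AddCommGroup Vk] [Module ℂ Vk] [AddCommGroup Vl] [Module ℂ Vl]
    [AddCommGroup Vkl] [Module ℂ Vkl]
    (nNk nAk : Seminorm ℂ Vk) (nNl nAl : Seminorm ℂ Vl) (nNkl nAkl : Seminorm ℂ Vkl)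
    (mul : Vk →ₗ[ℂ] Vl →ₗ[ℂ] Vkl)
    (θ : ℝ)
    (cN cA : ℝ) (hcN : 0 < cN) (hcA : 0 < cA)
    (hN : ∀ (x : Vk) (y : Vl), nNkl (mul x y) ≤ cN * nNk x * nNl y)
    (hA : ∀ (x : Vk) (y : Vl), nAkl (mul x y) ≤ cA * nAk x * nAl y) :
    ∀ (x : Vk) (y : Vl),
      interpNorm (fun v => nNkl v) (fun v => nAkl v) θ (mul x y) ≤
        cN ^ (1 - θ) * cA ^ θ *
          (interpNorm (fun v => nNk v) (fun v => nAk v) θ x *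
            interpNorm (fun v => nNl v) (fun v => nAl v) θ y) := by
  intro x y
  simp only [interpNorm_eq_sInf_interpBounds]
  exact csInf_le_mul_csInf_mul_csInf (by positivity) (interpBounds_nonempty _ _ _ _)
    (interpBounds_nonempty _ _ _ _) (fun _ => nonneg_of_mem_interpBounds)
    (fun _ => nonneg_of_mem_interpBounds) ⟨0, fun _ => nonneg_of_mem_interpBounds⟩
    fun _ hx _ hy => map₂_mem_interpBounds mul hcN hcA hN hA hx hy

/-- Bilinear complex interpolation applied to the multiplication of homogeneous polynomials
on a Hilbert space `H`.  `Vk, Vl, Vkl` are the (common dense subspaces of) `k`-, `l`- and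
`(k+l)`-homogeneous polynomials carrying both the nuclear norms `nN…` and the approximable
norms `nA…`, and `S_p = [P_N, P_A]_θ` with `p(1−θ) = 1`, `1 < p < ∞`.  If the product map is
bounded with norm `cN` for the nuclear norms and `cA` for the approximable norms, then it is
bounded for the interpolated (`Schatten–von Neumann S_p`) norms with norm at most
`cN^{1−θ} · cA^θ`. -/
theorem stmt_19 {Vk Vl Vkl : Type*}
    [AddCommGroup Vk] [Module ℂ Vk] [AddCommGroup Vl] [Module ℂ Vl]
    [AddCommGroup Vkl] [Module ℂ Vkl]
    (nNk nAk : Seminorm ℂ Vk) (nNl nAl : Seminorm ℂ Vl) (nNkl nAkl : Seminorm ℂ Vkl)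
    (mul : Vk →ₗ[ℂ] Vl →ₗ[ℂ] Vkl)
    (p θ : ℝ) (hp : 1 < p) (hθ0 : 0 < θ) (hθ1 : θ < 1) (hpθ : p * (1 - θ) = 1)
    (cN cA : ℝ) (hcN : 0 < cN) (hcA : 0 < cA)
    (hN : ∀ (x : Vk) (y : Vl), nNkl (mul x y) ≤ cN * nNk x * nNl y)
    (hA : ∀ (x : Vk) (y : Vl), nAkl (mul x y) ≤ cA * nAk x * nAl y) :
    ∀ (x : Vk) (y : Vl),
      interpNorm (fun v => nNkl v) (fun v => nAkl v) θ (mul x y) ≤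
        cN ^ (1 - θ) * cA ^ θ *
          (interpNorm (fun v => nNk v) (fun v => nAk v) θ x *
            interpNorm (fun v => nNl v) (fun v => nAl v) θ y) :=
  stmt_19_general nNk nAk nNl nAl nNkl nAkl mul θ cN cA hcN hcA hN hA
end
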